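/- If J and J' are almost revlex monomial ideals in K[x_1,...,x_n] such that R/J and R/J' have the same Hilbert function, then J = J'. -/
import Mathlib


open Finset

/-- Total degree of a monomial (exponent vector). -/
def mdeg {n : ℕ} (α : Fin n →₀ ℕ) : ℕ := α.sum fun _ e => e

/-- A set of exponent vectors is the set of monomials of a monomial ideal. -/
def IsMonIdeal {n : ℕ} (S : Set (Fin n →₀ ℕ)) : Prop :=
  ∀ α ∈ S, ∀ β : Fin n →₀ ℕ, α + β ∈ S

/-- `α` is a minimal monomial generator of the monomial ideal with monomials `S`. -/
def MinGen {n : ℕ} (S : Set (Fin n →₀ ℕ)) (α : Fin n →₀ ℕ) : Prop :=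
  α ∈ S ∧ ∀ β ∈ S, β ≤ α → β = α

/-- Stable monomial ideal (variables ordered `x_1 ≻ ⋯ ≻ x_n`, i.e. index `0` largest). -/
def IsStable {n : ℕ} (S : Set (Fin n →₀ ℕ)) : Prop :=
  ∀ α ∈ S, ∀ m ∈ α.support, (∀ k ∈ α.support, k ≤ m) →
    ∀ i : Fin n, i < m → α - Finsupp.single m 1 + Finsupp.single i 1 ∈ S

def IsStronglyStable {n : ℕ} (S : Set (Fin n →₀ ℕ)) : Prop :=
  ∀ α ∈ S, ∀ i ∈ α.support, ∀ j : Fin n, j < i →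
    α - Finsupp.single i 1 + Finsupp.single j 1 ∈ S

/-- `drlLT α β` : `α` is smaller than `β` in degrevlex with `x_1 ≻ ⋯ ≻ x_n`. -/
def drlLT {n : ℕ} (α β : Fin n →₀ ℕ) : Prop :=
  mdeg α < mdeg β ∨ (mdeg α = mdeg β ∧ ∃ i : Fin n, β i < α i ∧ ∀ j : Fin n, i < j → α j = β j)

def IsAlmostRevLex {n : ℕ} (S : Set (Fin n →₀ ℕ)) : Prop :=
  IsMonIdeal S ∧ ∀ α, MinGen S α → ∀ β : Fin n →₀ ℕ, mdeg β = mdeg α → drlLT α β → β ∈ S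

/-- Combinatorial Hilbert function of `R/J`: number of degree-`t` monomials outside `S`. -/
noncomputable def hilbC {n : ℕ} (S : Set (Fin n →₀ ℕ)) (t : ℕ) : ℕ :=
  {α : Fin n →₀ ℕ | mdeg α = t ∧ α ∉ S}.ncard

/-- `fdiff H s t` is `Δ^s H (t)` with the convention `Δ^s H (0) = 1` for `s ≥ 1`. -/
def fdiff (H : ℕ → ℕ) : ℕ → ℕ → ℤ
  | 0, t => H t
  | _+1, 0 => 1
  | s+1, t+1 => fdiff H s (t+1) - fdiff H s t

lemma mdeg_eq_sum {n : ℕ} (α : Fin n →₀ ℕ) : mdeg α = ∑ i : Fin n, α i := by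
  rw [mdeg]; exact Finsupp.sum_fintype _ _ (fun _ => rfl)

lemma coord_le_mdeg {n : ℕ} (α : Fin n →₀ ℕ) (i : Fin n) : α i ≤ mdeg α := by
  rw [mdeg_eq_sum]
  exact Finset.single_le_sum (fun _ _ => Nat.zero_le _) (mem_univ i)

lemma mdeg_mono {n : ℕ} {α β : Fin n →₀ ℕ} (h : α ≤ β) : mdeg α ≤ mdeg β := by
  rw [mdeg_eq_sum, mdeg_eq_sum]
  exact Finset.sum_le_sum fun i _ => h i

lemma eq_of_le_of_mdeg_eq {n : ℕ} {α β : Fin n →₀ ℕ} (h : α ≤ β) (hd : mdeg α = mdeg β) :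
    α = β := by
  ext i
  by_contra hne
  have h1 : ∀ j : Fin n, α j ≤ β j := fun j => h j
  have h2 : α i < β i := lt_of_le_of_ne (h1 i) hne
  have : mdeg α < mdeg β := by
    rw [mdeg_eq_sum, mdeg_eq_sum]
    exact Finset.sum_lt_sum (fun j _ => h1 j) ⟨i, mem_univ i, h2⟩
  omega

lemma mdeg_lt_of_lt {n : ℕ} {α β : Fin n →₀ ℕ} (h : α ≤ β) (hne : α ≠ β) :
    mdeg α < mdeg β :=
  lt_of_le_of_ne (mdeg_mono h) fun hd => hne (eq_of_le_of_mdeg_eq h hd)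

lemma slice_finite {n t : ℕ} : {α : Fin n →₀ ℕ | mdeg α = t}.Finite := by
  have : {α : Fin n →₀ ℕ | mdeg α = t} ⊆ Set.Iic (Finsupp.equivFunOnFinite.symm fun _ => t) := by
    intro α hα
    intro i
    simpa using (hα ▸ coord_le_mdeg α i)
  exact (Set.finite_Iic _).subset this

lemma mem_of_le_isMonIdeal {n : ℕ} {S : Set (Fin n →₀ ℕ)}
    (hS : ∀ α ∈ S, ∀ β : Fin n →₀ ℕ, α + β ∈ S) {α β : Fin n →₀ ℕ}
    (hα : α ∈ S) (h : α ≤ β) : β ∈ S := by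
  have := hS α hα (β - α)
  rwa [add_tsub_cancel_of_le h] at this

/-- numeric key for degrevlex comparison within degree `t`; drl-smaller means larger key. -/
def dkey {n : ℕ} (t : ℕ) (α : Fin n →₀ ℕ) : ℕ := ∑ i : Fin n, α i * (t + 1) ^ (i : ℕ)

lemma geom_bound (t m : ℕ) : t * ∑ k ∈ range m, (t + 1) ^ k = (t + 1) ^ m - 1 := by
  induction m with
  | zero => simp
  | succ m ih =>
    rw [Finset.sum_range_succ, Nat.mul_add, ih, pow_succ]
    have h1 : 1 ≤ (t + 1) ^ m := Nat.one_le_pow _ _ (by omega)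
    have h2 : (t + 1) ^ m * (t + 1) = (t + 1) ^ m + t * (t + 1) ^ m := by ring
    omega

lemma dkey_lt {n t : ℕ} {α β : Fin n →₀ ℕ} (hα : mdeg α = t) (hβ : mdeg β = t)
    (i : Fin n) (hi : β i < α i) (htail : ∀ j : Fin n, i < j → α j = β j) :
    dkey t β < dkey t α := by
  have hsplit : ∀ γ : Fin n →₀ ℕ, dkey t γ =
      (∑ j ∈ Iio i, γ j * (t + 1) ^ (j : ℕ)) + γ i * (t + 1) ^ (i : ℕ)
        + ∑ j ∈ Ioi i, γ j * (t + 1) ^ (j : ℕ) := by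
    intro γ
    have h1 : (univ : Finset (Fin n)) = Iio i ∪ {i} ∪ Ioi i := by
      ext j
      simp only [mem_univ, mem_union, mem_Iio, mem_singleton, mem_Ioi, true_iff]
      rcases lt_trichotomy j i with h | h | h
      · exact Or.inl (Or.inl h)
      · exact Or.inl (Or.inr h)
      · exact Or.inr h
    have d1 : Disjoint (Iio i ∪ {i}) (Ioi i) := by
      simp only [disjoint_left, mem_union, mem_Iio, mem_singleton, mem_Ioi]
      rintro j (h | rfl) hj
      · exact absurd (h.trans hj) (lt_irrefl _)
      · exact absurd hj (lt_irrefl _)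
    have d2 : Disjoint (Iio i) ({i} : Finset (Fin n)) := by
      simp only [disjoint_left, mem_Iio, mem_singleton]
      rintro j h rfl; exact lt_irrefl _ h
    simp only [dkey]
    rw [h1, Finset.sum_union d1, Finset.sum_union d2, Finset.sum_singleton]
  have htaileq : ∑ j ∈ Ioi i, β j * (t + 1) ^ (j : ℕ) = ∑ j ∈ Ioi i, α j * (t + 1) ^ (j : ℕ) :=
    Finset.sum_congr rfl fun j hj => by rw [htail j (mem_Ioi.mp hj)]
  rw [hsplit α, hsplit β, ← htaileq]
  have hlow : ∑ j ∈ Iio i, β j * (t + 1) ^ (j : ℕ) ≤ (t + 1) ^ (i : ℕ) - 1 := by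
    calc ∑ j ∈ Iio i, β j * (t + 1) ^ (j : ℕ)
        ≤ ∑ j ∈ Iio i, t * (t + 1) ^ (j : ℕ) := by
          refine Finset.sum_le_sum fun j _ => Nat.mul_le_mul_right _ ?_
          exact hβ ▸ coord_le_mdeg β j
      _ = ∑ k ∈ (Iio i).image (Fin.val), t * (t + 1) ^ k := by
          rw [Finset.sum_image]
          intro a _ b _ h; exact Fin.val_injective h
      _ ≤ ∑ k ∈ range (i : ℕ), t * (t + 1) ^ k := by
          apply Finset.sum_le_sum_of_subset_of_nonneg
          · intro k hk
            simp only [mem_image, mem_Iio] at hk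
            obtain ⟨a, ha, rfl⟩ := hk
            rw [mem_range]
            exact ha
          · intros; exact Nat.zero_le _
      _ = t * ∑ k ∈ range (i : ℕ), (t + 1) ^ k := by rw [Finset.mul_sum]
      _ = (t + 1) ^ (i : ℕ) - 1 := geom_bound t _
  have hpow : 1 ≤ (t + 1) ^ (i : ℕ) := Nat.one_le_pow _ _ (by omega)
  have hmul : β i * (t + 1) ^ (i : ℕ) + (t + 1) ^ (i : ℕ) ≤ α i * (t + 1) ^ (i : ℕ) := by
    have : (β i + 1) * (t + 1) ^ (i : ℕ) ≤ α i * (t + 1) ^ (i : ℕ) :=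
      Nat.mul_le_mul_right _ hi
    nlinarith
  omega

lemma drl_total {n : ℕ} {α β : Fin n →₀ ℕ} (hd : mdeg α = mdeg β) (hne : α ≠ β) :
    drlLT α β ∨ drlLT β α := by
  have hD : (univ.filter fun j : Fin n => α j ≠ β j).Nonempty := by
    by_contra h
    simp only [Finset.not_nonempty_iff_eq_empty, Finset.filter_eq_empty_iff, mem_univ,
      not_not, forall_const] at h
    exact hne (Finsupp.ext h)
  set i := (univ.filter fun j : Fin n => α j ≠ β j).max' hD with hidef
  have hiD : i ∈ univ.filter fun j : Fin n => α j ≠ β j := Finset.max'_mem _ _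
  have hine : α i ≠ β i := by simpa using hiD
  have htail : ∀ j : Fin n, i < j → α j = β j := by
    intro j hj
    by_contra h
    have hle : j ≤ i := Finset.le_max' _ _ (by simpa using h)
    exact absurd hle (not_le.mpr hj)
  rcases lt_or_gt_of_ne hine with h | h
  · exact Or.inr (Or.inr ⟨hd.symm, i, h, fun j hj => (htail j hj).symm⟩)
  · exact Or.inl (Or.inr ⟨hd, i, h, htail⟩)

lemma drl_dkey_lt {n t : ℕ} {α β : Fin n →₀ ℕ} (hα : mdeg α = t) (hβ : mdeg β = t)
    (h : drlLT α β) : dkey t β < dkey t α := by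
  rcases h with h | ⟨_, i, hi, ht⟩
  · omega
  · exact dkey_lt hα hβ i hi ht

lemma drl_asymm {n : ℕ} {α β : Fin n →₀ ℕ} (h1 : drlLT α β) (h2 : drlLT β α) : False := by
  rcases h1 with h1 | ⟨hd1, h1'⟩
  · rcases h2 with h2 | ⟨hd2, _⟩ <;> omega
  · rcases h2 with h2 | ⟨hd2, h2'⟩
    · omega
    · have k1 := drl_dkey_lt rfl hd1.symm (Or.inr ⟨hd1, h1'⟩)
      have k2 := drl_dkey_lt (t := mdeg α) hd1.symm rfl (Or.inr ⟨hd2, h2'⟩)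
      omega

lemma drl_of_dkey_lt {n t : ℕ} {α β : Fin n →₀ ℕ} (hα : mdeg α = t) (hβ : mdeg β = t)
    (hk : dkey t β < dkey t α) : drlLT α β := by
  have hne : α ≠ β := fun h => by rw [h] at hk; omega
  rcases drl_total (hα.trans hβ.symm) hne with h | h
  · exact h
  · exfalso
    have := drl_dkey_lt hβ hα h
    omega

lemma drl_trans_deg {n t : ℕ} {α β γ : Fin n →₀ ℕ} (hα : mdeg α = t) (hβ : mdeg β = t)
    (hγ : mdeg γ = t) (h1 : drlLT α β) (h2 : drlLT β γ) : drlLT α γ := by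
  have k1 := drl_dkey_lt hα hβ h1
  have k2 := drl_dkey_lt hβ hγ h2
  exact drl_of_dkey_lt hα hγ (by omega)

lemma exists_drl_min {n t : ℕ} {G : Set (Fin n →₀ ℕ)} (hG : G.Finite) (hne : G.Nonempty)
    (hd : ∀ α ∈ G, mdeg α = t) : ∃ μ ∈ G, ∀ γ ∈ G, ¬ drlLT γ μ := by
  obtain ⟨μ, hμ, hmax⟩ := Finset.exists_max_image hG.toFinset (dkey t)
    (by simpa using hne)
  refine ⟨μ, hG.mem_toFinset.mp hμ, fun γ hγ h => ?_⟩
  have h1 := drl_dkey_lt (hd γ hγ) (hd μ (hG.mem_toFinset.mp hμ)) h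
  have h2 := hmax γ (hG.mem_toFinset.mpr hγ)
  omega

/-- The degree-`t` piece of an almost revlex ideal is either `M` (the multiples of lower
degree elements) or `M ∪ {β ⪰ μ}` for the drl-minimal new generator `μ`. -/
lemma arl_slice_structure {n t : ℕ} {S : Set (Fin n →₀ ℕ)} (hS : IsAlmostRevLex S) :
    ({α | mdeg α = t ∧ α ∈ S} : Set (Fin n →₀ ℕ)) =
      {β | mdeg β = t ∧ ∃ γ ∈ S, γ ≤ β ∧ γ ≠ β} ∨
    ∃ μ : Fin n →₀ ℕ, mdeg μ = t ∧ μ ∈ S ∧ μ ∉ {β | mdeg β = t ∧ ∃ γ ∈ S, γ ≤ β ∧ γ ≠ β} ∧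
      ({α | mdeg α = t ∧ α ∈ S} : Set (Fin n →₀ ℕ)) =
        {β | mdeg β = t ∧ ∃ γ ∈ S, γ ≤ β ∧ γ ≠ β} ∪ {β | mdeg β = t ∧ (β = μ ∨ drlLT μ β)} := by
  set M : Set (Fin n →₀ ℕ) := {β | mdeg β = t ∧ ∃ γ ∈ S, γ ≤ β ∧ γ ≠ β} with hM
  set A : Set (Fin n →₀ ℕ) := {α | mdeg α = t ∧ α ∈ S} with hA
  have hMA : M ⊆ A := by
    rintro β ⟨hd, γ, hγ, hle, _⟩
    exact ⟨hd, mem_of_le_isMonIdeal hS.1 hγ hle⟩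
  by_cases hemp : (A \ M).Nonempty
  · right
    have hfin : (A \ M).Finite :=
      (slice_finite (n := n) (t := t)).subset (fun x hx => hx.1.1)
    obtain ⟨μ, hμ, hmin⟩ := exists_drl_min hfin hemp (fun α hα => hα.1.1)
    have hμd : mdeg μ = t := hμ.1.1
    refine ⟨μ, hμd, hμ.1.2, hμ.2, ?_⟩
    have hμgen : MinGen S μ := by
      refine ⟨hμ.1.2, fun β hβ hle => ?_⟩
      by_contra hne
      exact hμ.2 ⟨hμd, β, hβ, hle, hne⟩
    apply Set.Subset.antisymm
    · intro α hα
      by_cases hαM : α ∈ M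
      · exact Or.inl hαM
      · right
        refine ⟨hα.1, ?_⟩
        by_cases heq : α = μ
        · exact Or.inl heq
        · rcases drl_total (show mdeg μ = mdeg α from hμd.trans hα.1.symm) (Ne.symm heq) with h | h
          · exact Or.inr h
          · exact absurd h (hmin α ⟨hα, hαM⟩)
    · rintro β (hβ | ⟨hβd, hβ⟩)
      · exact hMA hβ
      · rcases hβ with rfl | h
        · exact ⟨hβd, hμ.1.2⟩
        · exact ⟨hβd, hS.2 μ hμgen β (hβd.trans hμd.symm) h⟩
  · left
    rw [Set.not_nonempty_iff_eq_empty, Set.diff_eq_empty] at hemp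
    exact Set.Subset.antisymm hemp hMA

/-- Two almost revlex monomial ideals in `K[x_1,…,x_n]` with the same Hilbert function
coincide. -/
theorem almostRevLex_eq_of_hilbertFunction_eq {n : ℕ}
    (S S' : Set (Fin n →₀ ℕ)) (hS : IsAlmostRevLex S) (hS' : IsAlmostRevLex S')
    (hH : ∀ t, hilbC S t = hilbC S' t) : S = S' := by
  have main : ∀ t, ∀ α : Fin n →₀ ℕ, mdeg α = t → (α ∈ S ↔ α ∈ S') := by
    intro t
    induction t using Nat.strong_induction_on with
    | _ t IH =>
      -- the lower-shadow sets agree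
      have hMeq : ({β | mdeg β = t ∧ ∃ γ ∈ S, γ ≤ β ∧ γ ≠ β} : Set (Fin n →₀ ℕ)) =
          {β | mdeg β = t ∧ ∃ γ ∈ S', γ ≤ β ∧ γ ≠ β} := by
        ext β
        simp only [Set.mem_setOf_eq]
        constructor
        · rintro ⟨hd, γ, hγ, hle, hne⟩
          exact ⟨hd, γ, (IH (mdeg γ) (hd ▸ mdeg_lt_of_lt hle hne) γ rfl).mp hγ, hle, hne⟩
        · rintro ⟨hd, γ, hγ, hle, hne⟩
          exact ⟨hd, γ, (IH (mdeg γ) (hd ▸ mdeg_lt_of_lt hle hne) γ rfl).mpr hγ, hle, hne⟩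
      set M : Set (Fin n →₀ ℕ) := {β | mdeg β = t ∧ ∃ γ ∈ S, γ ≤ β ∧ γ ≠ β} with hMdef
      set A : Set (Fin n →₀ ℕ) := {α | mdeg α = t ∧ α ∈ S} with hAdef
      set A' : Set (Fin n →₀ ℕ) := {α | mdeg α = t ∧ α ∈ S'} with hA'def
      have hAfin : A.Finite := (slice_finite (n := n) (t := t)).subset (fun x hx => hx.1)
      have hA'fin : A'.Finite := (slice_finite (n := n) (t := t)).subset (fun x hx => hx.1)
      -- equal cardinalitieserrand
      have hcard : A.ncard = A'.ncard := by
        have h1 : A.ncard + hilbC S t = ({α : Fin n →₀ ℕ | mdeg α = t}).ncard := by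
          rw [hilbC, ← Set.ncard_union_eq ?_ hAfin
            ((slice_finite (n := n) (t := t)).subset (fun x hx => hx.1))]
          · congr 1
            ext α
            simp only [Set.mem_union, Set.mem_setOf_eq, hAdef]
            by_cases h : α ∈ S <;> by_cases hd : mdeg α = t <;> simp [h, hd]
          · rw [Set.disjoint_left]
            rintro α ⟨_, hα⟩ ⟨_, hα'⟩
            exact hα' hα
        have h2 : A'.ncard + hilbC S' t = ({α : Fin n →₀ ℕ | mdeg α = t}).ncard := by
          rw [hilbC, ← Set.ncard_union_eq ?_ hA'fin
            ((slice_finite (n := n) (t := t)).subset (fun x hx => hx.1))]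
          · congr 1
            ext α
            simp only [Set.mem_union, Set.mem_setOf_eq, hA'def]
            by_cases h : α ∈ S' <;> by_cases hd : mdeg α = t <;> simp [h, hd]
          · rw [Set.disjoint_left]
            rintro α ⟨_, hα⟩ ⟨_, hα'⟩
            exact hα' hα
        have := hH t
        omega
      -- structure of the two slices
      have hstr := arl_slice_structure (t := t) hS
      have hstr' := arl_slice_structure (t := t) hS'
      rw [← hMdef, ← hAdef] at hstr
      rw [← hMeq, ← hA'def] at hstr'
      have hAA' : A = A' := by
        rcases hstr with hA1 | ⟨μ, hμd, hμS, hμM, hA1⟩ <;>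
          rcases hstr' with hA2 | ⟨μ', hμ'd, hμ'S, hμ'M, hA2⟩
        · rw [hA1, hA2]
        · -- A = M ⊂ A', contradiction with cards
          exfalso
          have hss : A ⊂ A' := by
            constructor
            · rw [hA1, hA2]; exact Set.subset_union_left
            · intro hsub
              have : μ' ∈ A := hsub ?_
              · rw [hA1] at this; exact hμ'M this
              · rw [hA2]; exact Or.inr ⟨hμ'd, Or.inl rfl⟩
          have := Set.ncard_lt_ncard hss hA'fin
          omega
        · exfalso
          have hss : A' ⊂ A := by
            constructor
            · rw [hA1, hA2]; exact Set.subset_union_left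
            · intro hsub
              have : μ ∈ A' := hsub ?_
              · rw [hA2] at this; exact hμM this
              · rw [hA1]; exact Or.inr ⟨hμd, Or.inl rfl⟩
          have := Set.ncard_lt_ncard hss hAfin
          omega
        · -- both have minimal new generators
          by_cases heq : μ = μ'
          · rw [hA1, hA2, heq]
          · exfalso
            -- wlog part: show strict inclusion either way
            have keystep : ∀ (B B' : Set (Fin n →₀ ℕ)) (ν ν' : Fin n →₀ ℕ),
                mdeg ν = t → mdeg ν' = t → ν ∉ M → ν' ∉ M →
                B = M ∪ {β | mdeg β = t ∧ (β = ν ∨ drlLT ν β)} →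
                B' = M ∪ {β | mdeg β = t ∧ (β = ν' ∨ drlLT ν' β)} →
                drlLT ν ν' → B' ⊂ B := by
              intro B B' ν ν' hνd hν'd hνM hν'M hB hB' hlt
              constructor
              · rw [hB, hB']
                apply Set.union_subset_union_right
                rintro β ⟨hβd, rfl | h⟩
                · exact ⟨hβd, Or.inr hlt⟩
                · exact ⟨hβd, Or.inr (drl_trans_deg hνd hν'd hβd hlt h)⟩
              · intro hsub
                have hν : ν ∈ B' := hsub (by rw [hB]; exact Or.inr ⟨hνd, Or.inl rfl⟩)
                rw [hB'] at hν
                rcases hν with h | ⟨_, h | h⟩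
                · exact hνM h
                · rw [h] at hlt; exact drl_asymm hlt hlt
                · exact drl_asymm hlt h
            rcases drl_total (hμd.trans hμ'd.symm) heq with h | h
            · have hss := keystep A A' μ μ' hμd hμ'd hμM hμ'M hA1 hA2 h
              have := Set.ncard_lt_ncard hss hAfin
              omega
            · have hss := keystep A' A μ' μ hμ'd hμd hμ'M hμM hA2 hA1 h
              have := Set.ncard_lt_ncard hss hA'fin
              omega
      intro α hα
      constructor
      · intro h
        have : α ∈ A := ⟨hα, h⟩
        rw [hAA'] at this
        exact this.2
      · intro h
        have : α ∈ A' := ⟨hα, h⟩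
        rw [← hAA'] at this
        exact this.2
  ext α
  exact main (mdeg α) α rfl
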